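/- Let K be a compact convex subset of a finite-dimensional real vector space with full effect algebra E(K). If (K, E(K)) is simplex-embeddable (there are a simplex S_Λ and affine maps ι : K → S_Λ, κ* : S_Λ → K with κ* ∘ ι = id_K in the sense that f(κ*(ι(ρ))) = f(ρ) for all effects f and ρ ∈ K), then K is a simplex. -/

import Mathlib

/-!
Effects separate the points of `K`, so the retraction `ρ ↦ ∑ λ, h_λ(ρ) • σ_λ` through the simplex
is the identity on `K`. Hence `K` is the convex hull of the finitely many `σ_λ`, and by
Krein–Milman it is the convex hull of its finitely many extreme points. At an extreme point `e`
the convex combination `e = ∑ λ, h_λ(e) • σ_λ` can only charge those `λ` with `σ_λ = e`, so the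
affine functions `φ_e = ∑_{σ_λ = e} h_λ` satisfy `φ_e(e') = δ_{e e'}` on extreme points, which
forces the extreme points to be affinely independent.
-/

open Finset

variable {V : Type*} [NormedAddCommGroup V] [NormedSpace ℝ V] [FiniteDimensional ℝ V]

/-- The effect algebra `E(K)`: affine functions with values in `[0,1]` on `K`. -/
def effectAlgebra (K : Set V) : Set (V →ᵃ[ℝ] ℝ) :=
  {f | ∀ x ∈ K, f x ∈ Set.Icc (0 : ℝ) 1}

section Effects

variable {E : Type*} [NormedAddCommGroup E] [NormedSpace ℝ E] {K : Set E}

lemma exists_mem_effectAlgebra_eq_smul_add (hK : IsCompact K) (g : E →L[ℝ] ℝ) :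
    ∃ f ∈ effectAlgebra K, ∃ a ≠ (0 : ℝ), ∃ b : ℝ, ∀ x, f x = a * g x + b := by
  obtain ⟨C, hC⟩ := hK.exists_bound_of_continuousOn g.continuous.continuousOn
  set c := max C 1
  have hc : 0 < c := lt_max_of_lt_right one_pos
  set f := (2 * c)⁻¹ • (g : E →ₗ[ℝ] ℝ).toAffineMap + AffineMap.const ℝ E (1 / 2)
  have hf : ∀ x, f x = (2 * c)⁻¹ * g x + 1 / 2 := fun _ => rfl
  refine ⟨f, fun x hx => ?_, (2 * c)⁻¹, by positivity, 1 / 2, hf⟩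
  have hgx : |g x| ≤ c := (hC x hx).trans (le_max_left C 1)
  have hscaled : |(2 * c)⁻¹ * g x| ≤ 1 / 2 := by
    rw [abs_mul, abs_of_pos (by positivity : 0 < (2 * c)⁻¹), inv_mul_le_iff₀ (by positivity)]
    linarith
  rw [hf, Set.mem_Icc]
  constructor <;> linarith [abs_le.1 hscaled]

lemma eq_of_forall_mem_effectAlgebra_apply_eq (hK : IsCompact K) {x y : E}
    (hxy : ∀ f ∈ effectAlgebra K, f x = f y) : x = y := by
  by_contra hne
  obtain ⟨g, hg⟩ := SeparatingDual.exists_separating_of_ne (R := ℝ) hne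
  obtain ⟨f, hf, a, ha, b, hfg⟩ := exists_mem_effectAlgebra_eq_smul_add hK g
  have := hxy f hf
  rw [hfg, hfg, add_left_inj, mul_right_inj' ha] at this
  exact hg this

end Effects

theorem AffineMap.finset_sum_apply {ι k V₁ P₁ V₂ : Type*} [Ring k] [AddCommGroup V₁]
    [Module k V₁] [AddTorsor V₁ P₁] [AddCommGroup V₂] [Module k V₂] (f : ι → P₁ →ᵃ[k] V₂)
    (s : Finset ι) (x : P₁) : (∑ i ∈ s, f i) x = ∑ i ∈ s, f i x :=
  map_sum (AddMonoidHom.mk' (fun g : P₁ →ᵃ[k] V₂ => g x) fun _ _ => rfl) f s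

lemma affineIndependent_of_apply_eq_ite {ι k V P : Type*} [Fintype ι] [DecidableEq ι] [Ring k]
    [AddCommGroup V] [Module k V] [AddTorsor V P] (p : ι → P) (φ : ι → P →ᵃ[k] k)
    (hφ : ∀ i j, φ i (p j) = if i = j then 1 else 0) : AffineIndependent k p := by
  rw [affineIndependent_iff_eq_of_fintype_affineCombination_eq]
  intro w₁ w₂ hw₁ hw₂ heq
  funext i
  have := congrArg (φ i) heq
  rw [univ.map_affineCombination p w₁ hw₁, univ.map_affineCombination p w₂ hw₂,
    affineCombination_eq_linear_combination _ _ _ hw₁,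
    affineCombination_eq_linear_combination _ _ _ hw₂] at this
  simpa [hφ] using this

lemma convexHull_extremePoints_eq_of_finite {E : Type*} [AddCommGroup E] [Module ℝ E]
    [TopologicalSpace E] [T2Space E] [IsTopologicalAddGroup E] [ContinuousSMul ℝ E]
    [LocallyConvexSpace ℝ E] {K : Set E} (hK : IsCompact K) (hKc : Convex ℝ K)
    (hfin : (K.extremePoints ℝ).Finite) : convexHull ℝ (K.extremePoints ℝ) = K := by
  rw [← (hfin.isClosed_convexHull ℝ).closure_eq]
  exact closure_convexHull_extremePoints hK hKc

section ConvexCombination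

variable {ι E : Type*} [Fintype ι] [AddCommGroup E] [Module ℝ E] {K : Set E}

lemma weight_eq_zero_of_sum_smul_eq_mem_extremePoints (hK : Convex ℝ K) {e : E}
    (he : e ∈ K.extremePoints ℝ) {w : ι → ℝ} {z : ι → E} (hw₀ : ∀ j, 0 ≤ w j)
    (hw₁ : ∑ j, w j = 1) (hz : ∀ j, z j ∈ K) (hwz : ∑ j, w j • z j = e) {i : ι}
    (hi : z i ≠ e) : w i = 0 := by
  classical
  by_contra hwi
  have hpos : 0 < w i := (hw₀ i).lt_of_ne' hwi
  have hrest_w : ∑ j ∈ univ.erase i, w j = 1 - w i := by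
    rw [← hw₁, ← sum_erase_add _ _ (mem_univ i), add_sub_cancel_right]
  have hsplit : ∑ j ∈ univ.erase i, w j • z j + w i • z i = e := by
    rw [sum_erase_add _ _ (mem_univ i), hwz]
  rcases (hw₁ ▸ single_le_sum (fun j _ => hw₀ j) (mem_univ i) : w i ≤ 1).eq_or_lt with h1 | h1
  · have hrest_zero : ∀ j ∈ univ.erase i, w j = 0 :=
      (sum_eq_zero_iff_of_nonneg fun j _ => hw₀ j).1 (by rw [hrest_w, h1, sub_self])
    rw [sum_eq_zero fun j hj => by rw [hrest_zero j hj, zero_smul], zero_add, h1, one_smul]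
      at hsplit
    exact hi hsplit
  · have h1' : 0 < 1 - w i := sub_pos.2 h1
    set y := ∑ j ∈ univ.erase i, ((1 - w i)⁻¹ * w j) • z j
    have hy : y ∈ K := hK.sum_mem (fun j _ => mul_nonneg (inv_nonneg.2 h1'.le) (hw₀ j))
      (by rw [← mul_sum, hrest_w, inv_mul_cancel₀ h1'.ne']) fun j _ => hz j
    have hseg : e ∈ openSegment ℝ (z i) y := by
      refine ⟨w i, 1 - w i, hpos, h1', add_sub_cancel _ _, ?_⟩
      simp_rw [y, smul_sum, smul_smul, mul_inv_cancel_left₀ h1'.ne']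
      rw [add_comm, hsplit]
    exact hi (he.2 (hz i) hy hseg)

variable {h : ι → E →ᵃ[ℝ] ℝ} {σ : ι → E}

lemma convexHull_range_eq_of_retraction (hK : Convex ℝ K) (hh : ∀ i, ∀ x ∈ K, 0 ≤ h i x)
    (hsum : ∀ x ∈ K, ∑ i, h i x = 1) (hσ : ∀ i, σ i ∈ K)
    (hret : ∀ x ∈ K, ∑ i, h i x • σ i = x) : convexHull ℝ (Set.range σ) = K := by
  refine (convexHull_min (Set.range_subset_iff.2 hσ) hK).antisymm fun x hx => ?_
  rw [← hret x hx]
  exact (convex_convexHull ℝ _).sum_mem (fun i _ => hh i x hx) (hsum x hx)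
    fun i _ => subset_convexHull ℝ _ ⟨i, rfl⟩

lemma sum_filter_apply_of_mem_extremePoints [DecidableEq E] (hK : Convex ℝ K)
    (hh : ∀ i, ∀ x ∈ K, 0 ≤ h i x) (hsum : ∀ x ∈ K, ∑ i, h i x = 1) (hσ : ∀ i, σ i ∈ K)
    (hret : ∀ x ∈ K, ∑ i, h i x • σ i = x) {e e' : E} (he : e ∈ K.extremePoints ℝ)
    (he' : e' ∈ K.extremePoints ℝ) :
    ∑ i ∈ univ with σ i = e, h i e' = if e = e' then 1 else 0 := by
  have hvanish : ∀ i, σ i ≠ e' → h i e' = 0 := fun i =>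
    weight_eq_zero_of_sum_smul_eq_mem_extremePoints hK he' (fun j => hh j e' he'.1)
      (hsum e' he'.1) hσ (hret e' he'.1)
  split_ifs with hee'
  · subst hee'
    rw [sum_filter_of_ne fun i _ => not_imp_comm.1 (hvanish i), hsum e he.1]
  · exact sum_eq_zero fun i hi => hvanish i ((mem_filter.1 hi).2 ▸ hee')

end ConvexCombination

/-- `h lam` are the components of `ι : K → S_Λ` and `σ lam` the images under `κ*` of the vertices
of `S_Λ`. -/
theorem simplexEmbeddable_noRestriction_implies_simplex
    (K : Set V) (hKcomp : IsCompact K) (hKconv : Convex ℝ K)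
    (hembed : ∃ (N : ℕ) (h : Fin N → (V →ᵃ[ℝ] ℝ)) (σ : Fin N → V),
      (∀ lam, h lam ∈ effectAlgebra K) ∧
      (∀ ρ ∈ K, ∑ lam, h lam ρ = 1) ∧
      (∀ lam, σ lam ∈ K) ∧
      (∀ f ∈ effectAlgebra K, ∀ ρ ∈ K, f (∑ lam, h lam ρ • σ lam) = f ρ)) :
    ∃ (n : ℕ) (s : Fin n → V), AffineIndependent ℝ s ∧ K = convexHull ℝ (Set.range s) := by
  classical
  obtain ⟨N, h, σ, hEff, hsum, hσ, hfix⟩ := hembed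
  have hh : ∀ i, ∀ x ∈ K, 0 ≤ h i x := fun i x hx => (hEff i x hx).1
  have hret : ∀ x ∈ K, ∑ i, h i x • σ i = x := fun x hx =>
    eq_of_forall_mem_effectAlgebra_apply_eq hKcomp fun f hf => hfix f hf x hx
  have hfin : (K.extremePoints ℝ).Finite := (Set.finite_range σ).subset <| by
    rw [← convexHull_range_eq_of_retraction hKconv hh hsum hσ hret]
    exact extremePoints_convexHull_subset
  obtain ⟨n, s, hs⟩ := hfin.fin_embedding
  have hsext : ∀ j, s j ∈ K.extremePoints ℝ := fun j => hs ▸ ⟨j, rfl⟩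
  refine ⟨n, s, ?_, ?_⟩
  · refine affineIndependent_of_apply_eq_ite _ (fun j => ∑ i ∈ univ with σ i = s j, h i)
      fun j j' => ?_
    rw [AffineMap.finset_sum_apply, sum_filter_apply_of_mem_extremePoints hKconv hh hsum hσ hret
      (hsext j) (hsext j')]
    exact if_congr s.injective.eq_iff rfl rfl
  · rw [hs, convexHull_extremePoints_eq_of_finite hKcomp hKconv hfin]
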